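/- With σ^A, σ^B jointly i.i.d. Rademacher arrays of shapes N×r and M×r, define W_{ij} = Σ_{k=1}^r σ^A_{ik} σ^B_{jk}. Then P(Σ_{i,j} W_{ij}² ≥ (1/2)·N·M·r) ≥ 1 − 8/(N·M) for every N, M, r ≥ 1. -/

import Mathlib

/-!
Expanding the squares gives `Σ_{ij} W_{ij}² = NMr + Y`, where `Y` sums the Walsh products
`σᴬ_{ik} σᴬ_{il} σᴮ_{jk} σᴮ_{jl}` over all `i, j` and `k ≠ l`. Walsh products of independent
Rademacher signs are orthonormal (`E[σ_S σ_T] = [S = T]`, since `σ_S σ_T = σ_{S ∆ T}`), and the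
index set `{ik, il, jk, jl}` of a term determines `(i, j, k, l)` up to swapping `k` and `l`, so
`E[Y²] ≤ 2NMr²`. Chebyshev's inequality then gives
`P(Y < -NMr/2) ≤ 2NMr² / (NMr/2)² = 8/(NM)`.
-/

open MeasureTheory ProbabilityTheory Finset

theorem Finset.prod_mul_prod_eq_prod_symmDiff {ι M : Type*} [DecidableEq ι] [CommMonoid M]
    {f : ι → M} (hf : ∀ x, f x * f x = 1) (s t : Finset ι) :
    (∏ x ∈ s, f x) * ∏ x ∈ t, f x = ∏ x ∈ symmDiff s t, f x := by
  have hsq : ∀ u : Finset ι, (∏ x ∈ u, f x) * ∏ x ∈ u, f x = 1 := fun u => by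
    rw [← prod_mul_distrib, prod_congr rfl fun x _ => hf x, prod_const_one]
  rw [← prod_inter_mul_prod_sdiff s t, ← prod_inter_mul_prod_sdiff t s, inter_comm t s,
    symmDiff_def, sup_eq_union, prod_union disjoint_sdiff_sdiff]
  calc _ = ((∏ x ∈ s ∩ t, f x) * ∏ x ∈ s ∩ t, f x) *
        ((∏ x ∈ s \ t, f x) * ∏ x ∈ t \ s, f x) := by ac_rfl
    _ = _ := by rw [hsq, one_mul]

section Rademacher

variable {Ω ι : Type*} [MeasurableSpace Ω] {μ : Measure Ω}

structure IsRademacher (X : Ω → ℝ) (μ : Measure Ω) : Prop where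
  measurable : Measurable X
  eq_one_or_eq_neg_one : ∀ ω, X ω = 1 ∨ X ω = -1
  measure_setOf_eq_one : μ {ω | X ω = 1} = 1 / 2

namespace IsRademacher

variable {X : Ω → ℝ}

theorem mul_self_eq_one (hX : IsRademacher X μ) (ω : Ω) : X ω * X ω = 1 :=
  mul_self_eq_one_iff.mpr (hX.eq_one_or_eq_neg_one ω)

theorem abs_le_one (hX : IsRademacher X μ) (ω : Ω) : |X ω| ≤ 1 :=
  (abs_eq zero_le_one |>.mpr (hX.eq_one_or_eq_neg_one ω)).le

theorem integral_eq_zero [IsProbabilityMeasure μ] (hX : IsRademacher X μ) : ∫ ω, X ω ∂μ = 0 := by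
  set A := {ω | X ω = 1}
  have hA : MeasurableSet A := hX.measurable (measurableSet_singleton 1)
  have hsplit : ∀ ω, X ω = A.indicator 1 ω - Aᶜ.indicator 1 ω := fun ω => by
    rcases hX.eq_one_or_eq_neg_one ω with h | h <;> by_cases hω : ω ∈ A <;> simp_all [A]
  rw [integral_congr_ae (ae_of_all _ hsplit),
    integral_sub ((integrable_const 1).indicator hA) ((integrable_const 1).indicator hA.compl),
    integral_indicator_one hA, integral_indicator_one hA.compl, probReal_compl_eq_one_sub hA,
    measureReal_def, hX.measure_setOf_eq_one]
  norm_num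

end IsRademacher

theorem integrable_prod_mul_prod_of_abs_le_one [IsFiniteMeasure μ] {σ : ι → Ω → ℝ}
    (hmeas : ∀ x, Measurable (σ x)) (hle : ∀ x ω, |σ x ω| ≤ 1) (s t : Finset ι) :
    Integrable (fun ω => (∏ x ∈ s, σ x ω) * ∏ x ∈ t, σ x ω) μ := by
  refine Integrable.of_bound (by fun_prop) 1 (ae_of_all _ fun ω => ?_)
  rw [Real.norm_eq_abs, abs_mul, abs_prod, abs_prod]
  exact mul_le_one₀ (prod_le_one (fun _ _ => abs_nonneg _) fun x _ => hle x ω)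
    (prod_nonneg fun _ _ => abs_nonneg _) (prod_le_one (fun _ _ => abs_nonneg _) fun x _ => hle x ω)

theorem integrable_sq_sum_prod_of_abs_le_one [IsFiniteMeasure μ] {κ : Type*} {σ : ι → Ω → ℝ}
    (hmeas : ∀ x, Measurable (σ x)) (hle : ∀ x ω, |σ x ω| ≤ 1)
    (P : Finset κ) (S : κ → Finset ι) :
    Integrable (fun ω => (∑ p ∈ P, ∏ x ∈ S p, σ x ω) ^ 2) μ := by
  simp_rw [sq, sum_mul_sum]
  exact integrable_finsetSum _ fun p _ => integrable_finsetSum _ fun q _ =>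
    integrable_prod_mul_prod_of_abs_le_one hmeas hle _ _

variable [IsProbabilityMeasure μ] {σ : ι → Ω → ℝ}

theorem integral_prod_eq_zero_of_isRademacher (hindep : iIndepFun σ μ)
    (hσ : ∀ x, IsRademacher (σ x) μ) {s : Finset ι} (hs : s.Nonempty) :
    ∫ ω, ∏ x ∈ s, σ x ω ∂μ = 0 := by
  obtain ⟨x, hx⟩ := hs
  simp_rw [← prod_coe_sort s]
  rw [(hindep.precomp Subtype.val_injective).integral_fun_prod_eq_prod_integral
    fun y => (hσ y).measurable.aestronglyMeasurable]
  exact prod_eq_zero (mem_univ ⟨x, hx⟩) (hσ x).integral_eq_zero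

theorem integral_prod_mul_prod_of_isRademacher [DecidableEq ι] (hindep : iIndepFun σ μ)
    (hσ : ∀ x, IsRademacher (σ x) μ) (s t : Finset ι) :
    ∫ ω, (∏ x ∈ s, σ x ω) * ∏ x ∈ t, σ x ω ∂μ = if s = t then 1 else 0 := by
  simp_rw [prod_mul_prod_eq_prod_symmDiff fun x => (hσ x).mul_self_eq_one _]
  split_ifs with hst
  · simp [hst]
  · exact integral_prod_eq_zero_of_isRademacher hindep hσ
      (nonempty_iff_ne_empty.mpr (mt symmDiff_eq_bot.mp hst))

theorem integral_sq_sum_prod_of_isRademacher [DecidableEq ι] {κ : Type*}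
    (hindep : iIndepFun σ μ) (hσ : ∀ x, IsRademacher (σ x) μ) (P : Finset κ)
    (S : κ → Finset ι) :
    ∫ ω, (∑ p ∈ P, ∏ x ∈ S p, σ x ω) ^ 2 ∂μ = ∑ p ∈ P, (#{q ∈ P | S p = S q} : ℝ) := by
  have hint := integrable_prod_mul_prod_of_abs_le_one (μ := μ)
    (fun x => (hσ x).measurable) fun x => (hσ x).abs_le_one
  simp_rw [sq, sum_mul_sum]
  rw [integral_finsetSum _ fun p _ => integrable_finsetSum _ fun q _ => hint _ _]
  refine sum_congr rfl fun p _ => ?_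
  rw [integral_finsetSum _ fun q _ => hint _ _]
  simp_rw [integral_prod_mul_prod_of_isRademacher hindep hσ, sum_boole]

end Rademacher

theorem ofReal_one_sub_div_sq_le_measure_neg_le {Ω : Type*} [MeasurableSpace Ω] {μ : Measure Ω}
    [IsProbabilityMeasure μ] {Y : Ω → ℝ} (hint : Integrable (fun ω => Y ω ^ 2) μ) {c v : ℝ}
    (hc : 0 < c) (hv : ∫ ω, Y ω ^ 2 ∂μ ≤ v) :
    ENNReal.ofReal (1 - v / c ^ 2) ≤ μ {ω | -c ≤ Y ω} := by
  set B := {ω | c ^ 2 ≤ Y ω ^ 2}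
  have hB : NullMeasurableSet B μ := nullMeasurableSet_le aemeasurable_const hint.aemeasurable
  have hμB : μ.real B ≤ v / c ^ 2 := by
    rw [le_div_iff₀ (by positivity), mul_comm]
    exact (mul_meas_ge_le_integral_of_nonneg (ae_of_all _ fun ω => sq_nonneg _) hint _).trans hv
  have hsub : Bᶜ ⊆ {ω | -c ≤ Y ω} := fun ω hω =>
    (abs_lt_of_sq_lt_sq' (not_le.mp (show ¬ c ^ 2 ≤ Y ω ^ 2 from hω)) hc.le).1.le
  calc ENNReal.ofReal (1 - v / c ^ 2) ≤ ENNReal.ofReal (μ.real Bᶜ) := by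
        rw [probReal_compl_eq_one_sub₀ hB]
        exact ENNReal.ofReal_le_ofReal (by linarith)
    _ ≤ μ {ω | -c ≤ Y ω} := by
        rw [ofReal_measureReal]
        exact measure_mono hsub

theorem card_univ_product_offDiag_le (α β κ : Type*) [Fintype α] [Fintype β] [Fintype κ]
    [DecidableEq κ] :
    #((univ : Finset (α × β)) ×ˢ (univ : Finset κ).offDiag) ≤
      Fintype.card α * Fintype.card β * Fintype.card κ ^ 2 := by
  rw [card_product, offDiag_card, card_univ, card_univ, Fintype.card_prod, sq]
  exact Nat.mul_le_mul_left _ (Nat.sub_le _ _)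

section CrossTerms

variable {α β κ : Type*} [DecidableEq α] [DecidableEq β] [DecidableEq κ]

def crossTermSupport (p : (α × β) × (κ × κ)) : Finset ((α × κ) ⊕ (β × κ)) :=
  {.inl (p.1.1, p.2.1), .inl (p.1.1, p.2.2), .inr (p.1.2, p.2.1), .inr (p.1.2, p.2.2)}

theorem prod_crossTermSupport {M : Type*} [CommMonoid M] (f : (α × κ) ⊕ (β × κ) → M)
    (i : α) (j : β) {k l : κ} (hkl : k ≠ l) :
    ∏ x ∈ crossTermSupport ((i, j), (k, l)), f x =
      f (.inl (i, k)) * f (.inl (i, l)) * f (.inr (j, k)) * f (.inr (j, l)) := by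
  simp [crossTermSupport, hkl, mul_assoc]

variable [Fintype α] [Fintype β] [Fintype κ]

theorem card_filter_crossTermSupport_eq_le_two (p : (α × β) × (κ × κ)) :
    #{q ∈ univ ×ˢ univ.offDiag | crossTermSupport p = crossTermSupport q} ≤ 2 := by
  refine (card_le_card fun q hq => ?_).trans (card_le_two (a := p) (b := (p.1, p.2.swap)))
  obtain ⟨⟨i, j⟩, k, l⟩ := p
  obtain ⟨⟨i', j'⟩, k', l'⟩ := q
  simp only [mem_filter, mem_product, mem_univ, mem_offDiag, true_and] at hq
  obtain ⟨hkl', heq⟩ := hq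
  have h1 : .inl (i', k') ∈ crossTermSupport ((i, j), (k, l)) := heq ▸ by simp [crossTermSupport]
  have h2 : .inl (i', l') ∈ crossTermSupport ((i, j), (k, l)) := heq ▸ by simp [crossTermSupport]
  have h3 : .inr (j', k') ∈ crossTermSupport ((i, j), (k, l)) := heq ▸ by simp [crossTermSupport]
  simp only [crossTermSupport, mem_insert, mem_singleton, Sum.inl.injEq, Sum.inr.injEq,
    Prod.mk.injEq, reduceCtorEq, or_self, or_false, false_or, Prod.swap_prod_mk] at h1 h2 h3 ⊢
  grind

theorem sum_sq_sum_mul_eq_card_add_sum_crossTerms {f : (α × κ) ⊕ (β × κ) → ℝ}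
    (hf : ∀ x, f x * f x = 1) :
    ∑ i, ∑ j, (∑ k, f (.inl (i, k)) * f (.inr (j, k))) ^ 2 =
      Fintype.card α * Fintype.card β * Fintype.card κ +
        ∑ p ∈ univ ×ˢ univ.offDiag, ∏ x ∈ crossTermSupport p, f x := by
  have hentry : ∀ i j, (∑ k, f (.inl (i, k)) * f (.inr (j, k))) ^ 2 =
      Fintype.card κ + ∑ kl ∈ univ.offDiag, ∏ x ∈ crossTermSupport ((i, j), kl), f x := by
    intro i j
    rw [sq, sum_mul_sum, ← sum_product', ← diag_union_offDiag,
      sum_union (disjoint_diag_offDiag _), sum_diag]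
    congr 1
    · simp [mul_mul_mul_comm, hf]
    · refine sum_congr rfl fun ⟨k, l⟩ hkl => ?_
      rw [prod_crossTermSupport f i j (mem_offDiag.mp hkl).2.2]
      ring
  simp_rw [hentry, sum_product, ← Fintype.sum_prod_type', sum_add_distrib]
  simp [mul_assoc]

theorem integral_sq_sum_crossTerms_le {Ω : Type*} [MeasurableSpace Ω] {μ : Measure Ω}
    [IsProbabilityMeasure μ] {σ : (α × κ) ⊕ (β × κ) → Ω → ℝ} (hindep : iIndepFun σ μ)
    (hσ : ∀ x, IsRademacher (σ x) μ) :
    ∫ ω, (∑ p ∈ univ ×ˢ univ.offDiag, ∏ x ∈ crossTermSupport p, σ x ω) ^ 2 ∂μ ≤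
      2 * (Fintype.card α * Fintype.card β * Fintype.card κ ^ 2) := by
  rw [integral_sq_sum_prod_of_isRademacher hindep hσ]
  calc _ ≤ ∑ p ∈ (univ : Finset (α × β)) ×ˢ (univ : Finset κ).offDiag, (2 : ℝ) :=
        sum_le_sum fun p _ => by exact_mod_cast card_filter_crossTermSupport_eq_le_two p
    _ ≤ _ := by
        rw [sum_const, nsmul_eq_mul, mul_comm]
        gcongr
        exact_mod_cast card_univ_product_offDiag_le α β κ

end CrossTerms

/-- Lower bound on the Rademacher signal: with jointly i.i.d. Rademacher
arrays and `W_{ij} = Σ_k σᴬ_{ik} σᴮ_{jk}`, for every `N, M, r ≥ 1`,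
`P(Σ_{ij} W_{ij}² ≥ ½ N M r) ≥ 1 − 8/(N M)`. -/
theorem rademacher_signal_lower_bound
    {Ω : Type*} [MeasurableSpace Ω] (μ : Measure Ω) [IsProbabilityMeasure μ]
    (N M r : ℕ) (hN : 1 ≤ N) (hM : 1 ≤ M) (hr : 1 ≤ r)
    (σ : (Fin N × Fin r) ⊕ (Fin M × Fin r) → Ω → ℝ)
    (hindep : iIndepFun σ μ)
    (hmeas : ∀ idx, Measurable (σ idx))
    (hpm : ∀ idx ω, σ idx ω = 1 ∨ σ idx ω = -1)
    (hhalf : ∀ idx, μ {ω | σ idx ω = 1} = 1 / 2)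
    (W : Fin N → Fin M → Ω → ℝ)
    (hW : ∀ i j ω, W i j ω = ∑ k, σ (Sum.inl (i, k)) ω * σ (Sum.inr (j, k)) ω) :
    ENNReal.ofReal (1 - 8 / (N * M)) ≤
      μ {ω | (N * M * r : ℝ) / 2 ≤ ∑ i, ∑ j, (W i j ω) ^ 2} := by
  have hσ : ∀ x, IsRademacher (σ x) μ := fun x => ⟨hmeas x, hpm x, hhalf x⟩
  set Y := fun ω => ∑ p ∈ univ ×ˢ univ.offDiag, ∏ x ∈ crossTermSupport p, σ x ω
  have hdecomp : ∀ ω, ∑ i, ∑ j, W i j ω ^ 2 = N * M * r + Y ω := fun ω => by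
    simpa [hW] using sum_sq_sum_mul_eq_card_add_sum_crossTerms fun x => (hσ x).mul_self_eq_one ω
  have hc : (0 : ℝ) < N * M * r / 2 := by positivity
  have hratio : 2 * ((N : ℝ) * M * r ^ 2) / (N * M * r / 2) ^ 2 = 8 / (N * M) := by
    field_simp
    ring
  have hchebyshev := ofReal_one_sub_div_sq_le_measure_neg_le
    (integrable_sq_sum_prod_of_abs_le_one hmeas (fun x => (hσ x).abs_le_one) _ _) hc
    (integral_sq_sum_crossTerms_le hindep hσ)
  simp only [Fintype.card_fin, hratio] at hchebyshev
  refine hchebyshev.trans (measure_mono fun ω hω => ?_)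
  simp only [Set.mem_ofPred_eq, hdecomp] at hω ⊢
  linarith
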